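/- arXiv:0710.2090 — 3 statements merged into one kernel-verified Lean document; each statement's English description precedes it below -/
import Mathlib

section
/- Every symmetric function f : 𝔽_q × 𝔽_q → 𝔽_q (i.e., f(x,y) = f(y,x)) is the polynomial function of some symmetric polynomial F ∈ 𝔽_q[x,y] (i.e., F(x,y) = F(y,x) as polynomials). -/
open MvPolynomial

lemma rename_indicator {F : Type*} [Field F] [Fintype F] (e : Equiv.Perm (Fin 2))
    (a : Fin 2 → F) :
    rename e (indicator a) = indicator (a ∘ e.symm) := by
  simp only [indicator, map_prod, map_sub, map_one, map_pow, rename_X, rename_C]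
  exact Fintype.prod_equiv e _ _ (fun i => by simp)

/-- Every symmetric function `𝔽_q × 𝔽_q → 𝔽_q` on a finite field is the polynomial function of
a symmetric polynomial in two variables. -/
theorem exists_symm_polynomial_of_symm_function {F : Type*} [Field F] [Fintype F]
    (f : F → F → F) (hf : ∀ x y, f x y = f y x) :
    ∃ P : MvPolynomial (Fin 2) F,
      MvPolynomial.rename (Equiv.swap (0 : Fin 2) 1) P = P ∧
      ∀ x y : F, MvPolynomial.eval ![x, y] P = f x y := by
  classical
  refine ⟨∑ a : Fin 2 → F, C (f (a 0) (a 1)) * indicator a, ?_, ?_⟩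
  · rw [map_sum]
    refine Fintype.sum_equiv (Equiv.arrowCongr (Equiv.swap (0 : Fin 2) 1) (Equiv.refl F)) _ _
      (fun a => ?_)
    rw [map_mul, rename_C, rename_indicator]
    simp only [Equiv.arrowCongr_apply, Equiv.symm_swap, Equiv.refl_symm, Equiv.coe_refl,
      Function.comp_apply, Function.comp_def, id_eq, Equiv.swap_apply_left,
      Equiv.swap_apply_right]
    rw [hf (a 1) (a 0)]
    congr 1
  · intro x y
    rw [map_sum]
    rw [Finset.sum_eq_single (![x, y])]
    · rw [map_mul, eval_C, eval_indicator_apply_eq_one, mul_one]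
      simp
    · intro b _ hb
      rw [map_mul, eval_indicator_apply_eq_zero _ _ (Ne.symm hb), mul_zero]
    · simp
end

section
/- Let Γ be an alphabet and w a word over Γ of length n ≥ 2 such that all letters of w are pairwise distinct. Define π(w₁...wₙ) = [w₁,w₂][w₂,w₃]...[w_{n-1},wₙ] with [a,b] the unordered pair. Then for any word v of length n over Γ, π(v) = π(w) implies v = w or v = σ(w), where σ is word reversal. -/
/-- `π` maps a word `w₁...wₙ` to the word of unordered pairs of consecutive letters. -/
def pairCode {Γ : Type*} (w : List Γ) : List (Sym2 Γ) :=
  List.zipWith (fun a b => s(a, b)) w w.tail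

lemma pairCode_cons_cons {Γ : Type*} (a b : Γ) (l : List Γ) :
    pairCode (a :: b :: l) = s(a, b) :: pairCode (b :: l) := rfl

/-- If `w` has length `n ≥ 2` and pairwise distinct letters, then any word `v` of length `n` with
`π(v) = π(w)` equals `w` or its reversal. -/
theorem pairCode_inj_of_nodup {Γ : Type*} (w : List Γ) (hw : 2 ≤ w.length) (hnd : w.Nodup)
    (v : List Γ) (hv : v.length = w.length) (h : pairCode v = pairCode w) :
    v = w ∨ v = w.reverse := by
  induction w generalizing v with
  | nil => simp at hw
  | cons a w' ih =>
    obtain ⟨b, l, rfl⟩ : ∃ b l, w' = b :: l := by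
      cases w' with
      | nil => simp at hw
      | cons b l => exact ⟨b, l, rfl⟩
    obtain ⟨x, y, m, rfl⟩ : ∃ x y m, v = x :: y :: m := by
      match v, hv with
      | x :: y :: m, _ => exact ⟨x, y, m, rfl⟩
    rw [pairCode_cons_cons, pairCode_cons_cons] at h
    obtain ⟨h1, h2⟩ := List.cons.injEq _ _ _ _ ▸ h
    rw [Sym2.eq_iff] at h1
    cases l with
    | nil =>
      obtain rfl : m = [] := by simpa using hv
      rcases h1 with ⟨rfl, rfl⟩ | ⟨rfl, rfl⟩
      · exact Or.inl rfl
      · exact Or.inr rfl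
    | cons c l' =>
      obtain ⟨z, m', rfl⟩ : ∃ z m', m = z :: m' := by
        match m, hv with
        | z :: m', _ => exact ⟨z, m', rfl⟩
      rw [pairCode_cons_cons, pairCode_cons_cons] at h2
      obtain ⟨h3, h4⟩ := List.cons.injEq _ _ _ _ ▸ h2
      rw [Sym2.eq_iff] at h3
      have hab : a ≠ b := by simp [List.nodup_cons] at hnd; tauto
      have hac : a ≠ c := by simp [List.nodup_cons] at hnd; tauto
      have hbc : b ≠ c := by simp [List.nodup_cons] at hnd; tauto
      rcases h1 with ⟨rfl, rfl⟩ | ⟨rfl, rfl⟩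
      · -- x = a, y = b
        obtain rfl : z = c := by
          rcases h3 with ⟨-, rfl⟩ | ⟨h', -⟩
          · rfl
          · exact absurd h' hbc
        have hnd' : (y :: z :: l').Nodup := hnd.of_cons
        have := ih (by simp) hnd' (y :: z :: m') (by simpa using hv)
          (by rw [pairCode_cons_cons, pairCode_cons_cons, h4])
        rcases this with heq | heq
        · exact Or.inl (by rw [heq])
        · exfalso
          have hlast : y ∈ (z :: l').getLast? := by
            have : (y :: z :: l').reverse.head? = some y := by rw [← heq]; rfl
            rw [List.head?_reverse, List.getLast?_cons_cons] at this
            exact this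
          obtain ⟨hne, hy⟩ := List.mem_getLast?_eq_getLast hlast
          have : y ∈ z :: l' := hy ▸ List.getLast_mem hne
          exact (List.nodup_cons.mp hnd').1 this
      · -- x = b, y = a : contradiction with h3
        rcases h3 with ⟨rfl, -⟩ | ⟨hac', -⟩
        · exact absurd rfl hab
        · exact absurd hac' hac
end

section
/- Let Γ be an alphabet with a distinguished letter 0, and let w = w₁...wₙ (n ≥ 2) be a word in which two consecutive letters are equal only if both are 0. Define π(w) = [w₁,w₂]...[w_{n-1},wₙ]. Suppose moreover that all letters of w other than 0 are pairwise distinct and w contains at most one maximal block of 0's. Then any word v with π(v) = π(w) satisfies v = w or v = σ(w). -/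
/-- Let `w` be a word of length `n ≥ 2` over an alphabet with a distinguished letter `0` such
that: two consecutive letters are equal only if both are `0`, the nonzero letters of `w` are
pairwise distinct, and `w` has at most one maximal block of `0`'s (the zeros are contiguous).
Then any word `v` with `π(v) = π(w)` equals `w` or its reversal. -/
theorem pairCode_inj_of_blocks {Γ : Type*} [DecidableEq Γ] (z : Γ) (w : List Γ)
    (hw : 2 ≤ w.length)
    (hconsec : w.Chain' (fun a b => a = b → a = z))
    (hnd : (w.filter (fun a => a ≠ z)).Nodup)
    (hblock : ∀ i j k : ℕ, ∀ hi : i < w.length, ∀ hj : j < w.length, ∀ hk : k < w.length,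
      i ≤ j → j ≤ k → w[i] = z → w[k] = z → w[j] = z)
    (v : List Γ) (h : pairCode v = pairCode w) :
    v = w ∨ v = w.reverse := by
  have hlen : v.length = w.length := by
    have := congrArg List.length h
    simp only [pairCode, List.length_zipWith, List.length_tail] at this
    omega
  have hpair : ∀ i (hi : i + 1 < w.length),
      s(v[i]'(by omega), v[i+1]'(by omega)) = s(w[i]'(by omega), w[i+1]'hi) := by
    intro i hi
    have hil : i < (pairCode v).length := by
      simp only [pairCode, List.length_zipWith, List.length_tail]; omega
    have h1 : (pairCode v)[i]'hil = (pairCode w)[i]'(by rw [← h]; exact hil) := by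
      simp only [h]
    simpa only [pairCode, List.getElem_zipWith, List.getElem_tail] using h1
  have hcons : ∀ i (hi : i + 1 < w.length),
      w[i]'(by omega) = w[i+1]'hi → w[i]'(by omega) = z := by
    intro i hi
    have := List.isChain_iff_getElem.mp hconsec i (by omega)
    simpa using this
  have key : ∀ i (hi : i + 1 < w.length),
      ((v[i]'(by omega) = w[i]'(by omega)) ↔ (v[i+1]'(by omega) = w[i+1]'hi)) := by
    intro i hi
    rcases Sym2.eq_iff.mp (hpair i hi) with ⟨h1, h2⟩ | ⟨h1, h2⟩
    · simp [h1, h2]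
    · constructor
      · intro hvi
        have hww : w[i]'(by omega) = w[i+1]'hi := by rw [← hvi, h1]
        have hz := hcons i hi hww
        rw [h2, ← hww]
      · intro hvi
        have hww : w[i]'(by omega) = w[i+1]'hi := by rw [← hvi, h2]
        rw [h1, ← hww]
  have const : ∀ i (hi : i < w.length),
      ((v[i]'(by omega) = w[i]'hi) ↔ (v[0]'(by omega) = w[0]'(by omega))) := by
    intro i
    induction i with
    | zero => intro hi; rfl
    | succ k ih => intro hi; rw [← key k hi]; exact ih (by omega)
  by_cases h0 : v[0]'(by omega) = w[0]'(by omega)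
  · left
    apply List.ext_getElem hlen
    intro i h1 h2
    exact (const i h2).mpr h0
  · have hne : ∀ i (hi : i < w.length), v[i]'(by omega) ≠ w[i]'hi := by
      intro i hi hh
      exact h0 ((const i hi).mp hh)
    have flip : ∀ i (hi : i + 1 < w.length),
        v[i]'(by omega) = w[i+1]'hi ∧ v[i+1]'(by omega) = w[i]'(by omega) := by
      intro i hi
      rcases Sym2.eq_iff.mp (hpair i hi) with ⟨h1, h2⟩ | ⟨h1, h2⟩
      · exact absurd h1 (hne i (by omega))
      · exact ⟨h1, h2⟩
    by_cases hc : w.length = 2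
    · right
      apply List.ext_getElem (by rw [hlen, List.length_reverse])
      intro i h1 h2
      have hi2 : i < 2 := by rw [List.length_reverse, hc] at h2; exact h2
      rw [List.getElem_reverse]
      have h20 : (0:ℕ) + 1 < w.length := by omega
      interval_cases i
      · have := (flip 0 h20).1
        simpa [hc] using this
      · have := (flip 0 h20).2
        simpa [hc] using this
    · exfalso
      have hn3 : 3 ≤ w.length := by omega
      have h01 : (0:ℕ) + 1 < w.length := by omega
      have h12 : (1:ℕ) + 1 < w.length := by omega
      have hv10 : v[1]'(by omega) = w[0]'(by omega) := (flip 0 h01).2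
      have hv12 : v[1]'(by omega) = w[2]'(by omega) := (flip 1 h12).1
      have h02 : w[0]'(by omega) = w[2]'(by omega) := by rw [← hv10, hv12]
      have hz0 : w[0]'(by omega) = z := by
        by_contra hz
        obtain ⟨a, b, c, t, rfl⟩ : ∃ a b c t, w = a :: b :: c :: t := by
          match w, hn3 with
          | a :: b :: c :: t, _ => exact ⟨a, b, c, t, rfl⟩
        simp only [List.getElem_cons_zero, List.getElem_cons_succ] at h02 hz
        rw [List.filter_cons_of_pos (by simpa using hz)] at hnd
        have hmem : a ∈ (b :: c :: t).filter (fun x => x ≠ z) := by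
          apply List.mem_filter.mpr
          refine ⟨?_, by simpa using hz⟩
          rw [h02]; simp
        exact (List.nodup_cons.mp hnd).1 hmem
      have hz2 : w[2]'(by omega) = z := by rw [← h02, hz0]
      have hz1 : w[1]'(by omega) = z :=
        hblock 0 1 2 (by omega) (by omega) (by omega) (by norm_num) (by norm_num) hz0 hz2
      have := (flip 0 h01).1
      rw [hz1, ← hz0] at this
      exact hne 0 (by omega) this
end
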